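/- arXiv:1304.3999 — 5 statements merged into one kernel-verified Lean document; each statement's English description precedes it below -/
import Mathlib

section
/- Let P be an N×N stochastic matrix, R ∈ ℝᴺ, γ ∈ [0,1), and λ ∈ [0,1). Define T : ℝᴺ → ℝᴺ by TV = R + γPV, and define T^λ V = (1-λ) ∑_{k=0}^∞ λᵏ T^{k+1} V. Then T^λ V = (I - λγP)⁻¹(R + (1-λ)γPV). -/
/-!
Peeling the first term off the series and using `T^{k+2} V = R + γ P T^{k+1} V` shows that
`W = T^λ V` solves the linear equation `W - λγ P W = R + (1 - λ) γ P V`. A row-stochastic `P`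
does not increase the sup norm, so `T` is a `γ`-contraction up to the constant `R`: its iterates
stay bounded, the series converges, and `I - λγP` is injective, hence invertible.
-/

open Matrix

section LambdaReturn

variable {E : Type*} [NormedAddCommGroup E] [NormedSpace ℝ E]

noncomputable def lambdaReturn (T : E → E) (lam : ℝ) (V : E) : E :=
  (1 - lam) • ∑' k : ℕ, lam ^ k • T^[k + 1] V

theorem norm_iterate_le_max_of_norm_le {α : Type*} [Norm α] {T : α → α} {r c : ℝ}
    (hc0 : 0 ≤ c) (hc1 : c < 1)
    (hT : ∀ x, ‖T x‖ ≤ r + c * ‖x‖) (x : α) (n : ℕ) :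
    ‖T^[n] x‖ ≤ max ‖x‖ (r / (1 - c)) := by
  set M := max ‖x‖ (r / (1 - c))
  have hrM : r ≤ (1 - c) * M := by
    rw [← div_le_iff₀' (by linarith)]
    exact le_max_right _ _
  induction n with
  | zero => exact le_max_left _ _
  | succ n ih =>
    rw [Function.iterate_succ_apply']
    nlinarith [hT (T^[n] x)]

theorem summable_pow_smul_of_norm_le [CompleteSpace E] {q : ℝ} (hq : ‖q‖ < 1) {x : ℕ → E}
    {C : ℝ} (hx : ∀ k, ‖x k‖ ≤ C) : Summable fun k => q ^ k • x k := by
  refine .of_norm_bounded ((summable_geometric_of_lt_one (norm_nonneg q) hq).mul_left C)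
    fun k => ?_
  rw [norm_smul, norm_pow, mul_comm]
  exact mul_le_mul_of_nonneg_right (hx k) (by positivity)

theorem tsum_smul_add_map {w : ℕ → ℝ} {x : ℕ → E} (hw : Summable w)
    (hwx : Summable fun k => w k • x k) (R : E) (B : E →L[ℝ] E) :
    ∑' k, w k • (R + B (x k)) = (∑' k, w k) • R + B (∑' k, w k • x k) := by
  simp only [smul_add, ← map_smul]
  rw [(hw.smul_const R).tsum_add (B.summable hwx), hw.tsum_smul_const, B.map_tsum hwx]

theorem lambdaReturn_sub_smul_map {R : E} {B : E →L[ℝ] E} {T : E → E}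
    (hT : ∀ x, T x = R + B x) {lam : ℝ} (hlam : ‖lam‖ < 1) {V : E}
    (hsum : Summable fun k : ℕ => lam ^ k • T^[k + 1] V) :
    lambdaReturn T lam V - lam • B (lambdaReturn T lam V) = R + (1 - lam) • B V := by
  set S := ∑' k : ℕ, lam ^ k • T^[k + 1] V with hSdef
  have hlam1 : 1 - lam ≠ 0 := sub_ne_zero.2 (ne_of_lt (lt_of_abs_lt hlam)).symm
  -- The tail of the series is `λ` times the same series with `T` applied termwise.
  have hS : S = T V + lam • ((1 - lam)⁻¹ • R + B S) := by
    have htail : ∀ k : ℕ, lam ^ (k + 1) • T^[k + 1 + 1] V =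
        lam • (lam ^ k • (R + B (T^[k + 1] V))) := by
      intro k
      rw [Function.iterate_succ_apply', hT, pow_succ', mul_smul]
    conv_lhs => rw [hSdef, hsum.tsum_eq_zero_add]
    simp only [htail, tsum_const_smul'', pow_zero, one_smul, zero_add, Function.iterate_one]
    rw [tsum_smul_add_map (summable_geometric_of_norm_lt_one hlam) hsum,
      tsum_geometric_of_norm_lt_one hlam]
  have hS' : S - lam • B S = T V + (lam * (1 - lam)⁻¹) • R := by
    rw [sub_eq_iff_eq_add]
    nth_rw 1 [hS]
    module
  calc lambdaReturn T lam V - lam • B (lambdaReturn T lam V)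
      = (1 - lam) • (S - lam • B S) := by
        simp only [lambdaReturn, map_smul, smul_sub, smul_comm lam (1 - lam)]
        rfl
    _ = R + (1 - lam) • B V := by
        rw [hS', smul_add, smul_smul, mul_left_comm, mul_inv_cancel₀ hlam1, mul_one, hT]
        module

end LambdaReturn

section RowStochastic

variable {n : Type*} [Fintype n] [DecidableEq n] {P : Matrix n n ℝ}

theorem norm_mulVec_le_of_mem_rowStochastic (hP : P ∈ rowStochastic ℝ n) (v : n → ℝ) :
    ‖P *ᵥ v‖ ≤ ‖v‖ := by
  refine (pi_norm_le_iff_of_nonneg (norm_nonneg v)).2 fun i => ?_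
  calc ‖(P *ᵥ v) i‖ = |∑ j, P i j * v j| := rfl
    _ ≤ ∑ j, |P i j * v j| := Finset.abs_sum_le_sum_abs _ _
    _ ≤ ∑ j, P i j * ‖v‖ := Finset.sum_le_sum fun j _ => by
        rw [abs_mul, abs_of_nonneg (nonneg_of_mem_rowStochastic hP)]
        exact mul_le_mul_of_nonneg_left (norm_le_pi_norm v j) (nonneg_of_mem_rowStochastic hP)
    _ = ‖v‖ := by rw [← Finset.sum_mul, sum_row_of_mem_rowStochastic hP i, one_mul]

theorem isUnit_one_sub_smul_of_mem_rowStochastic (hP : P ∈ rowStochastic ℝ n) {c : ℝ}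
    (hc : |c| < 1) : IsUnit (1 - c • P) := by
  refine mulVec_injective_iff_isUnit.1 fun v w hvw => ?_
  -- `u = v - w` is a fixed point of `c • P`, a strict contraction.
  set u := v - w
  have hu : u = c • P *ᵥ u := by
    simp only [sub_mulVec, one_mulVec, smul_mulVec] at hvw
    rw [mulVec_sub, smul_sub]
    exact sub_eq_sub_iff_sub_eq_sub.1 hvw
  have hnorm : ‖u‖ ≤ |c| * ‖u‖ := by
    conv_lhs => rw [hu]
    rw [norm_smul, Real.norm_eq_abs]
    exact mul_le_mul_of_nonneg_left (norm_mulVec_le_of_mem_rowStochastic hP u) (abs_nonneg c)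
  have : ‖u‖ = 0 := by nlinarith [norm_nonneg u, abs_nonneg c]
  exact sub_eq_zero.1 (norm_eq_zero.1 this)

end RowStochastic

/-- The λ-averaged Bellman operator has the closed form
    `T^λ V = (I - λγP)⁻¹ (R + (1-λ)γPV)`. -/
theorem tlambda_closed_form {N : ℕ} (P : Matrix (Fin N) (Fin N) ℝ)
    (R : Fin N → ℝ) (γ lam : ℝ)
    (hP0 : ∀ i j, 0 ≤ P i j) (hP1 : ∀ i, ∑ j, P i j = 1)
    (hγ : 0 ≤ γ) (hγ1 : γ < 1) (hlam : 0 ≤ lam) (hlam1 : lam < 1)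
    (T : (Fin N → ℝ) → (Fin N → ℝ))
    (hT : ∀ V, T V = R + γ • P.mulVec V) (V : Fin N → ℝ) :
    (1 - lam) • (∑' k : ℕ, lam ^ k • T^[k + 1] V) =
      ((1 - (lam * γ) • P)⁻¹).mulVec (R + ((1 - lam) * γ) • P.mulVec V) := by
  have hP : P ∈ rowStochastic ℝ (Fin N) := mem_rowStochastic_iff_sum.2 ⟨hP0, hP1⟩
  let B : (Fin N → ℝ) →L[ℝ] (Fin N → ℝ) := γ • LinearMap.toContinuousLinearMap P.mulVecLin
  have hB : ∀ x, B x = γ • P *ᵥ x := fun x => rfl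
  have hTB : ∀ x, T x = R + B x := fun x => by rw [hT, hB]
  have hTnorm : ∀ x, ‖T x‖ ≤ ‖R‖ + γ * ‖x‖ := fun x => by
    rw [hT]
    refine (norm_add_le _ _).trans (add_le_add_right ?_ _)
    rw [norm_smul, Real.norm_of_nonneg hγ]
    exact mul_le_mul_of_nonneg_left (norm_mulVec_le_of_mem_rowStochastic hP x) hγ
  have hlam' : ‖lam‖ < 1 := by rwa [Real.norm_of_nonneg hlam]
  have hsum : Summable fun k : ℕ => lam ^ k • T^[k + 1] V :=
    summable_pow_smul_of_norm_le hlam' fun k => norm_iterate_le_max_of_norm_le hγ hγ1 hTnorm V _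
  have hlamγ : |lam * γ| < 1 := by
    rw [abs_of_nonneg (by positivity)]
    exact mul_lt_one_of_nonneg_of_lt_one_left hlam hlam1 hγ1.le
  have := (isUnit_one_sub_smul_of_mem_rowStochastic hP hlamγ).invertible
  refine (inv_mulVec_eq_vec ?_).symm
  have key := lambdaReturn_sub_smul_map hTB hlam' hsum
  simp only [lambdaReturn, hB, smul_smul] at key
  rw [← key, sub_mulVec, one_mulVec, smul_mulVec, mul_comm lam γ]
end

section
/- With T, T^λ as above (P stochastic, γ, λ ∈ [0,1)), we have T^λ V = V + (I - λγP)⁻¹(R + γPV - V) for all V ∈ ℝᴺ. -/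
/-!
The increments of the iterates of the affine map `T V = R + γ P V` are
`T^[k+1] V - T^[k] V = (γP)^k (T V - V)`. Summation by parts rewrites
`(1 - λ) ∑ λ^k T^[k+1] V` as `V + ∑ λ^k (T^[k+1] V - T^[k] V) = V + ∑ (λγP)^k (T V - V)`,
a Neumann series summing to `(1 - λγP)⁻¹ (T V - V)`, since a stochastic matrix has
`‖P‖_∞ ≤ 1`. The left-hand series converges because the iterates `T^[k] V` converge.
-/

open Matrix Finset Filter Topology

attribute [local instance] Matrix.linftyOpNormedRing Matrix.linftyOpNormedSpace

theorem HasSum.pow_smul_sub {R E : Type*} [Ring R] [AddCommGroup E] [Module R E]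
    [TopologicalSpace E] [IsTopologicalAddGroup E] [ContinuousConstSMul R E]
    {c : R} {u : ℕ → E} {s : E} (hs : HasSum (fun k ↦ c ^ k • u (k + 1)) s) :
    HasSum (fun k ↦ c ^ k • (u (k + 1) - u k)) ((1 - c) • s - u 0) := by
  have hshift : HasSum (fun k ↦ c ^ k • u k) (c • s + u 0) := by
    have : HasSum (fun k ↦ c ^ (k + 1) • u (k + 1)) (c • s) := by
      simpa only [smul_smul, ← pow_succ'] using hs.const_smul c
    simpa using (hasSum_nat_add_iff (f := fun k ↦ c ^ k • u k) 1).1 this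
  convert hs.sub hshift using 1
  · ext k
    exact smul_sub _ _ _
  · rw [sub_smul, one_smul, sub_add_eq_sub_sub]

theorem tendsto_of_hasSum_sub {E : Type*} [AddCommGroup E] [TopologicalSpace E]
    [IsTopologicalAddGroup E] {u : ℕ → E} {x : E} (hu : HasSum (fun k ↦ u (k + 1) - u k) x) :
    Tendsto u atTop (𝓝 (u 0 + x)) := by
  have := hu.tendsto_sum_nat.const_add (u 0)
  simpa only [sum_range_sub, add_sub_cancel] using this

theorem summable_pow_smul_of_tendsto {𝕜 E : Type*} [NormedDivisionRing 𝕜] [NormedAddCommGroup E]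
    [Module 𝕜 E] [NormSMulClass 𝕜 E] [CompleteSpace E] {c : 𝕜} (hc : ‖c‖ < 1) {u : ℕ → E} {x : E}
    (hu : Tendsto u atTop (𝓝 x)) : Summable fun k ↦ c ^ k • u k := by
  obtain ⟨C, hC⟩ := (Metric.isBounded_range_of_tendsto u hu).exists_norm_le
  refine .of_norm_bounded ((summable_geometric_of_lt_one (norm_nonneg c) hc).mul_right C)
    fun k ↦ ?_
  rw [norm_smul, norm_pow]
  exact mul_le_mul_of_nonneg_left (hC _ ⟨k, rfl⟩) (by positivity)

namespace Matrix

variable {n : Type*} [Fintype n] [DecidableEq n]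

theorem iterate_succ_sub_iterate_of_affine {α : Type*} [Ring α] {T : (n → α) → n → α}
    {B : Matrix n n α} {c : n → α} (hT : ∀ v, T v = c + B *ᵥ v) (v : n → α) (k : ℕ) :
    T^[k + 1] v - T^[k] v = B ^ k *ᵥ (T v - v) := by
  induction k with
  | zero => simp
  | succ k ih =>
    have hsub : ∀ x y, T x - T y = B *ᵥ (x - y) := fun x y ↦ by
      rw [hT, hT, add_sub_add_left_eq_sub, mulVec_sub]
    rw [Function.iterate_succ_apply' T (k + 1), Function.iterate_succ_apply' T k, hsub,
      ← Function.iterate_succ_apply' T k, ih, mulVec_mulVec, ← pow_succ']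

theorem linfty_opNorm_le_one_of_mem_rowStochastic {P : Matrix n n ℝ}
    (hP : P ∈ rowStochastic ℝ n) : ‖P‖ ≤ 1 := by
  rw [linfty_opNorm_def, NNReal.coe_le_one]
  refine Finset.sup_le fun i _ ↦ ?_
  rw [← NNReal.coe_le_coe]
  push_cast
  simp only [Real.norm_of_nonneg (nonneg_of_mem_rowStochastic hP),
    sum_row_of_mem_rowStochastic hP, le_refl]

theorem hasSum_pow_mulVec {𝕜 : Type*} [RCLike 𝕜] {A : Matrix n n 𝕜} (hA : ‖A‖ < 1)
    (w : n → 𝕜) : HasSum (fun k ↦ A ^ k *ᵥ w) ((1 - A)⁻¹ *ᵥ w) := by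
  rw [nonsing_inv_eq_ringInverse]
  exact (hasSum_geom_series_inverse A hA).map (mulVec.addMonoidHomLeft w)
    (continuous_id.matrix_mulVec continuous_const)

end Matrix

/-- `T^λ V = V + (I - λγP)⁻¹ (R + γPV - V)`. -/
theorem tlambda_residual_form {N : ℕ} (P : Matrix (Fin N) (Fin N) ℝ)
    (R : Fin N → ℝ) (γ lam : ℝ)
    (hP0 : ∀ i j, 0 ≤ P i j) (hP1 : ∀ i, ∑ j, P i j = 1)
    (hγ : 0 ≤ γ) (hγ1 : γ < 1) (hlam : 0 ≤ lam) (hlam1 : lam < 1)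
    (T : (Fin N → ℝ) → (Fin N → ℝ))
    (hT : ∀ V, T V = R + γ • P.mulVec V) (V : Fin N → ℝ) :
    (1 - lam) • (∑' k : ℕ, lam ^ k • T^[k + 1] V) =
      V + ((1 - (lam * γ) • P)⁻¹).mulVec (R + γ • P.mulVec V - V) := by
  set B := γ • P
  have hTB : ∀ v, T v = R + B *ᵥ v := fun v ↦ by rw [hT, smul_mulVec]
  have hB : ‖B‖ ≤ γ := by
    have hP := mem_rowStochastic_iff_sum.2 ⟨hP0, hP1⟩
    rw [norm_smul, Real.norm_of_nonneg hγ]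
    exact mul_le_of_le_one_right hγ (linfty_opNorm_le_one_of_mem_rowStochastic hP)
  have hlamB : ‖lam • B‖ < 1 := by
    rw [norm_smul, Real.norm_of_nonneg hlam]
    nlinarith [norm_nonneg B]
  have hdiff := iterate_succ_sub_iterate_of_affine hTB V
  have hconv : Tendsto (fun k ↦ T^[k] V) atTop (𝓝 (V + (1 - B)⁻¹ *ᵥ (T V - V))) :=
    tendsto_of_hasSum_sub (by simpa only [hdiff] using hasSum_pow_mulVec (hB.trans_lt hγ1) _)
  obtain ⟨s, hs⟩ : Summable fun k ↦ lam ^ k • T^[k + 1] V :=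
    summable_pow_smul_of_tendsto (c := lam) (by rwa [Real.norm_of_nonneg hlam])
      (hconv.comp (tendsto_add_atTop_nat 1))
  have hpart := hs.pow_smul_sub (u := fun k ↦ T^[k] V)
  have hneumann := hasSum_pow_mulVec hlamB (T V - V)
  simp only [smul_pow, smul_mulVec, ← hdiff] at hneumann
  rw [hs.tsum_eq, mul_smul, ← hT, hneumann.unique hpart, Function.iterate_zero_apply,
    add_sub_cancel]
end

section
/- Let n ∈ ℕ, and for 1 ≤ i ≤ n define the operator T̂_i^λ on functions V by T̂_i^λ V = V(s_i) + ∑_{j=i}^n (γλ)^{j-i} (ρ_i^j (r_j + γ V(s_{j+1})) - ρ_i^{j-1} V(s_j)), where ρ_i^j = ∏_{l=i}^j ρ_l (with ρ_i^{j} = 1 if j < i). Then for i < n: T̂_i^λ V = ρ_i r_i + γ ρ_i (1-λ) V(s_{i+1}) + γλ ρ_i T̂_{i+1}^λ V. -/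
open Finset

/-
Peeling the `j = i` term off the sum defining `T̂_i^λ V`, every remaining summand
carries the factor `γ λ ρ_i` times the corresponding summand of `T̂_{i+1}^λ V`, because
`ρ_i^j = ρ_i ρ_{i+1}^j`. The peeled term is `ρ_i (r_i + γ V(s_{i+1})) - V(s_i)`, and the
remaining sum is `T̂_{i+1}^λ V - V(s_{i+1})`.
-/

theorem Finset.prod_Icc_eq_mul_prod_Icc_add_one {M : Type*} [CommMonoid M] (f : ℕ → M)
    {a b : ℕ} (h : a ≤ b) : ∏ x ∈ Icc a b, f x = f a * ∏ x ∈ Icc (a + 1) b, f x := by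
  rw [Icc_add_one_left_eq_Ioc, mul_prod_Ioc_eq_prod_Icc h]

theorem Finset.sum_Icc_eq_add_sum_Icc_add_one {M : Type*} [AddCommMonoid M] (f : ℕ → M)
    {a b : ℕ} (h : a ≤ b) : ∑ x ∈ Icc a b, f x = f a + ∑ x ∈ Icc (a + 1) b, f x := by
  rw [Icc_add_one_left_eq_Ioc, add_sum_Ioc_eq_sum_Icc h]

section DiscountedTDError

variable {S : Type*} (γ lam : ℝ) (s : ℕ → S) (r ρ : ℕ → ℝ) (V : S → ℝ)

/-- The `j`-th summand of `T̂_i^λ V`. -/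
def discountedTDError (i j : ℕ) : ℝ :=
  (γ * lam) ^ (j - i) *
    ((∏ l ∈ Icc i j, ρ l) * (r j + γ * V (s (j + 1))) - (∏ l ∈ Icc i (j - 1), ρ l) * V (s j))

theorem discountedTDError_of_lt {i j : ℕ} (hij : i < j) :
    discountedTDError γ lam s r ρ V i j =
      γ * lam * ρ i * discountedTDError γ lam s r ρ V (i + 1) j := by
  have hexp : j - i = j - (i + 1) + 1 := by omega
  rw [discountedTDError, discountedTDError, hexp, prod_Icc_eq_mul_prod_Icc_add_one ρ hij.le,
    prod_Icc_eq_mul_prod_Icc_add_one ρ (Nat.le_sub_one_of_lt hij)]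
  ring

/-- The empty product `ρ_i^{i-1} = 1` needs `1 ≤ i`: for `i = 0`, `Icc 0 (0 - 1) = {0}`. -/
theorem discountedTDError_self {i : ℕ} (hi : 1 ≤ i) :
    discountedTDError γ lam s r ρ V i i = ρ i * (r i + γ * V (s (i + 1))) - V (s i) := by
  rw [discountedTDError, Nat.sub_self, Icc_self, prod_singleton,
    Icc_eq_empty (by omega), prod_empty]
  ring

theorem sum_discountedTDError_eq {i n : ℕ} (hi : 1 ≤ i) (hin : i ≤ n) :
    ∑ j ∈ Icc i n, discountedTDError γ lam s r ρ V i j =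
      ρ i * (r i + γ * V (s (i + 1))) - V (s i) +
        γ * lam * ρ i * ∑ j ∈ Icc (i + 1) n, discountedTDError γ lam s r ρ V (i + 1) j := by
  rw [sum_Icc_eq_add_sum_Icc_add_one _ hin, discountedTDError_self γ lam s r ρ V hi, mul_sum]
  refine congrArg _ (sum_congr rfl fun j hj => ?_)
  exact discountedTDError_of_lt γ lam s r ρ V (mem_Icc.mp hj).1

end DiscountedTDError

/-- Forward recursion for the empirical untruncated λ-Bellman operator:
    for `1 ≤ i < n`, `T̂_i^λ V = ρ_i r_i + γρ_i(1-λ)V(s_{i+1}) + γλρ_i T̂_{i+1}^λ V`. -/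
theorem empirical_operator_forward_recursion {S : Type*} (n : ℕ) (γ lam : ℝ)
    (s : ℕ → S) (r ρ : ℕ → ℝ) (V : S → ℝ)
    (Tl : ℕ → ℝ)
    (hTl : ∀ i, Tl i = V (s i) + ∑ j ∈ Icc i n, (γ * lam) ^ (j - i) *
      ((∏ l ∈ Icc i j, ρ l) * (r j + γ * V (s (j + 1))) -
        (∏ l ∈ Icc i (j - 1), ρ l) * V (s j)))
    (i : ℕ) (hi1 : 1 ≤ i) (hin : i < n) :
    Tl i = ρ i * r i + γ * ρ i * (1 - lam) * V (s (i + 1)) + γ * lam * ρ i * Tl (i + 1) := by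
  have hTi : Tl i = V (s i) + ∑ j ∈ Icc i n, discountedTDError γ lam s r ρ V i j := hTl i
  have hTsucc : Tl (i + 1) =
      V (s (i + 1)) + ∑ j ∈ Icc (i + 1) n, discountedTDError γ lam s r ρ V (i + 1) j :=
    hTl (i + 1)
  rw [hTi, hTsucc, sum_discountedTDError_eq γ lam s r ρ V hi1 hin.le]
  ring
end

section
/- Consider a Markov chain (s_i) with stationary distribution μ₀ and per-state-action importance weights ρ(s,a) = π(a|s)/π₀(a|s). Let P̃ be the N×N matrix with entries p̃_{ss'} = ∑_a π(a|s) ρ(s,a) P(s'|s,a), and let x_i ∈ ℝᴺ be the indicator vector of state s_i. Writing ρ_m^{i-1} = ∏_{l=m}^{i-1} ρ(s_l, a_l), we have for all m ≤ i, E₀[(ρ_m^{i-1})² x_i x_iᵀ] = diag((P̃ᵀ)^{i-m} μ₀), where E₀ denotes expectation under the stationary distribution of the behavior chain. -/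
open Matrix Finset

/-! The product of the weights `π₀ ρ²` along a path equals the product of `π ρ`, so summing out
the actions turns the path weight into a product of entries of `P̃`; summing over paths then
computes a power of `P̃ᵀ` applied to `μ₀`. Since `x_i` is a one-hot vector, `x_i x_iᵀ` only
contributes on the diagonal. -/

theorem mul_div_sq_eq_mul_div {K : Type*} [Field K] (p q : K) :
    q * (p / q) ^ 2 = p * (p / q) := by
  rcases eq_or_ne q 0 with rfl | hq
  · simp
  · field_simp

namespace Matrix

variable {S R : Type*} [Fintype S] [DecidableEq S] [CommSemiring R]

theorem dotProduct_pow_mulVec_eq_sum_paths (M : Matrix S S R) (u v : S → R) (k : ℕ) :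
    u ⬝ᵥ (M ^ k *ᵥ v) =
      ∑ σ : Fin (k + 1) → S,
        u (σ 0) * (∏ l : Fin k, M (σ l.castSucc) (σ l.succ)) * v (σ (Fin.last k)) := by
  induction k generalizing u with
  | zero =>
    rw [pow_zero, one_mulVec, ← (Equiv.funUnique (Fin 1) S).symm.sum_comp]
    simp [dotProduct]
  | succ k ih =>
    rw [pow_succ', ← mulVec_mulVec, dotProduct_mulVec, ih,
      ← (Fin.consEquiv fun _ : Fin (k + 2) => S).sum_comp, Fintype.sum_prod_type, sum_comm]
    refine sum_congr rfl fun τ _ => ?_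
    simp only [Fin.consEquiv_apply, Fin.prod_univ_succ, Fin.cons_zero, Fin.castSucc_zero,
      ← Fin.succ_castSucc, ← Fin.succ_last, Fin.cons_succ, vecMul, dotProduct, sum_mul]
    exact sum_congr rfl fun x _ => by ring

theorem pow_transpose_mulVec_apply_eq_sum_paths (M : Matrix S S R)
    (u : S → R) (k : ℕ) (s : S) :
    (Mᵀ ^ k *ᵥ u) s =
      ∑ σ : Fin (k + 1) → S,
        u (σ 0) * (∏ l : Fin k, M (σ l.castSucc) (σ l.succ)) *
          if σ (Fin.last k) = s then 1 else 0 := by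
  simp only [← Pi.single_apply, ← dotProduct_pow_mulVec_eq_sum_paths, mulVec_single_one,
    ← transpose_pow, mulVec_transpose, vecMul]
  rfl

theorem of_sum_mul_ite_mul_ite {ι n R : Type*} [Fintype ι] [DecidableEq n] [Semiring R]
    (c : ι → R) (g : ι → n) :
    of (fun s s' => ∑ i, c i * (if g i = s then 1 else 0) * (if g i = s' then 1 else 0)) =
      diagonal fun s => ∑ i, c i * if g i = s then 1 else 0 := by
  ext s s'
  rw [of_apply, diagonal_apply]
  split_ifs with h
  · subst h
    simp only [mul_assoc, ite_zero_mul_ite_zero, and_self, mul_one]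
  · refine sum_eq_zero fun i _ => ?_
    split_ifs with hs hs' <;> simp_all

end Matrix

theorem importance_sampling_second_moment_general {N : ℕ} {A : Type*} [Fintype A]
    (π π₀ : Fin N → A → ℝ) (P : Fin N → A → Fin N → ℝ) (μ₀ : Fin N → ℝ)
    (ρ : Fin N → A → ℝ) (hρ : ∀ s a, ρ s a = π s a / π₀ s a)
    (Pt : Matrix (Fin N) (Fin N) ℝ)
    (hPt : ∀ s s', Pt s s' = ∑ a, π s a * ρ s a * P s a s')
    (k : ℕ) :
    (Matrix.of fun s s' : Fin N =>
        ∑ σ : Fin (k + 1) → Fin N, ∑ α : Fin k → A,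
          μ₀ (σ 0) *
            (∏ l : Fin k, π₀ (σ l.castSucc) (α l) * P (σ l.castSucc) (α l) (σ l.succ)) *
            (∏ l : Fin k, ρ (σ l.castSucc) (α l)) ^ 2 *
            (if σ (Fin.last k) = s then 1 else 0) *
            (if σ (Fin.last k) = s' then 1 else 0)) =
      Matrix.diagonal ((Ptᵀ ^ k).mulVec μ₀) := by
  have hweight : ∀ s a s', π₀ s a * P s a s' * ρ s a ^ 2 = π s a * ρ s a * P s a s' := by
    intro s a s'
    rw [hρ, mul_right_comm, mul_div_sq_eq_mul_div]
  have hpath : ∀ σ : Fin (k + 1) → Fin N,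
      ∑ α : Fin k → A, μ₀ (σ 0) *
        (∏ l : Fin k, π₀ (σ l.castSucc) (α l) * P (σ l.castSucc) (α l) (σ l.succ)) *
        (∏ l : Fin k, ρ (σ l.castSucc) (α l)) ^ 2 =
      μ₀ (σ 0) * ∏ l : Fin k, Pt (σ l.castSucc) (σ l.succ) := by
    intro σ
    simp only [mul_assoc, ← mul_sum, ← prod_pow, ← prod_mul_distrib, hweight, hPt,
      Fintype.prod_sum]
  calc _ = of fun s s' : Fin N => ∑ σ : Fin (k + 1) → Fin N,
          μ₀ (σ 0) * (∏ l : Fin k, Pt (σ l.castSucc) (σ l.succ)) *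
            (if σ (Fin.last k) = s then 1 else 0) * (if σ (Fin.last k) = s' then 1 else 0) := by
        ext s s'
        simp only [of_apply, ← sum_mul, hpath]
    _ = diagonal ((Ptᵀ ^ k).mulVec μ₀) := by
        rw [of_sum_mul_ite_mul_ite]
        congr 1
        funext s
        exact (pow_transpose_mulVec_apply_eq_sum_paths Pt μ₀ k s).symm

/-- Second-moment identity for importance-sampling products on a stationary Markov chain:
    `E₀[(ρ_m^{i-1})² x_i x_iᵀ] = diag((P̃ᵀ)^{i-m} μ₀)`, with the expectation written as an
    explicit sum over paths of length `k = i - m` started from the stationary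
    distribution `μ₀` and following the behavior policy `π₀`. -/
theorem importance_sampling_second_moment {N : ℕ} {A : Type*} [Fintype A]
    (π π₀ : Fin N → A → ℝ) (P : Fin N → A → Fin N → ℝ) (μ₀ : Fin N → ℝ)
    (hπ₀pos : ∀ s a, 0 < π₀ s a)
    (hstat : ∀ s', ∑ s, μ₀ s * ∑ a, π₀ s a * P s a s' = μ₀ s')
    (ρ : Fin N → A → ℝ) (hρ : ∀ s a, ρ s a = π s a / π₀ s a)
    (Pt : Matrix (Fin N) (Fin N) ℝ)
    (hPt : ∀ s s', Pt s s' = ∑ a, π s a * ρ s a * P s a s')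
    (k : ℕ) :
    (Matrix.of fun s s' : Fin N =>
        ∑ σ : Fin (k + 1) → Fin N, ∑ α : Fin k → A,
          μ₀ (σ 0) *
            (∏ l : Fin k, π₀ (σ l.castSucc) (α l) * P (σ l.castSucc) (α l) (σ l.succ)) *
            (∏ l : Fin k, ρ (σ l.castSucc) (α l)) ^ 2 *
            (if σ (Fin.last k) = s then 1 else 0) *
            (if σ (Fin.last k) = s' then 1 else 0)) =
      Matrix.diagonal ((Ptᵀ ^ k).mulVec μ₀) :=
  importance_sampling_second_moment_general π π₀ P μ₀ ρ hρ Pt hPt k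
end

section
/- In the same setting, for all m ≤ i ≤ j: E₀[ρ_m^{i-1} ρ_m^{j-1} x_i x_jᵀ] = diag((P̃ᵀ)^{i-m} μ₀) · P^{j-i}, where P is the transition matrix of the target policy π (P(s,s') = ∑_a π(a|s)P(s'|s,a)). -/
open Matrix Finset

/-!
The actions enter the path weight factor by factor, so they can be summed out step by step;
by the change of measure `π₀ ρ = π` a transition then contributes `∑ₐ π₀ ρ² P = P̃` before
time `k₁` and `∑ₐ π₀ ρ P = Pπ` afterwards, so the cross moment is a path sum of a
time-inhomogeneous chain. The endpoint marginal of such a sum is multiplied on the right by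
the current transition matrix at each step: it is `μ₀ᵀ P̃^{k₁}` at time `k₁`, where the
indicator `x_i` pins the state to `s`, and from there only `Pπ^{k₂}` is applied.
-/

namespace PathSum

variable {ι R : Type*} [Fintype ι] [DecidableEq ι] [CommSemiring R]

def pathWeight {n : ℕ} (M : ℕ → Matrix ι ι R) (σ : Fin (n + 1) → ι) : R :=
  ∏ l : Fin n, M l (σ l.castSucc) (σ l.succ)

def endpointMarginal {n : ℕ} (F : (Fin (n + 1) → ι) → R) (t : ι) : R :=
  ∑ σ, F σ * if σ (Fin.last n) = t then 1 else 0

omit [Fintype ι] [DecidableEq ι] in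
theorem pathWeight_succ {n : ℕ} (M : ℕ → Matrix ι ι R) (σ : Fin (n + 2) → ι) :
    pathWeight M σ =
      pathWeight M (Fin.init σ) * M n (σ (Fin.last n).castSucc) (σ (Fin.last (n + 1))) :=
  Fin.prod_univ_castSucc _

omit [Fintype ι] [DecidableEq ι] in
theorem pathWeight_congr {n : ℕ} {M M' : ℕ → Matrix ι ι R} (h : ∀ l < n, M l = M' l)
    (σ : Fin (n + 1) → ι) : pathWeight M σ = pathWeight M' σ :=
  Finset.prod_congr rfl fun l _ => by rw [h l l.isLt]

omit [DecidableEq ι] in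
theorem sum_eq_sum_snoc {n : ℕ} {β : Type*} [AddCommMonoid β] (f : (Fin (n + 1) → ι) → β) :
    ∑ σ, f σ = ∑ τ : Fin n → ι, ∑ x, f (Fin.snoc τ x) := by
  rw [← (Fin.snocEquiv fun _ => ι).sum_comp, Fintype.sum_prod_type, Finset.sum_comm]
  rfl

theorem endpointMarginal_fin_zero (F : (Fin 1 → ι) → R) (t : ι) :
    endpointMarginal F t = F fun _ => t := by
  rw [endpointMarginal, ← (Equiv.funUnique (Fin 1) ι).symm.sum_comp]
  simp only [Equiv.funUnique_symm_apply, Fin.last_zero, uniqueElim_const, mul_ite, mul_one,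
    mul_zero, sum_ite_eq', mem_univ, if_true]
  rfl

theorem endpointMarginal_eq_vecMul {n : ℕ} {G : (Fin (n + 2) → ι) → R}
    (F : (Fin (n + 1) → ι) → R) (M : Matrix ι ι R)
    (h : ∀ σ, G σ = F (Fin.init σ) * M (σ (Fin.last n).castSucc) (σ (Fin.last (n + 1)))) :
    endpointMarginal G = endpointMarginal F ᵥ* M := by
  ext t
  simp only [endpointMarginal, h, sum_eq_sum_snoc (n := n + 1), Fin.init_snoc, Fin.snoc_castSucc,
    Fin.snoc_last, vecMul, dotProduct, Finset.sum_mul]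
  rw [Finset.sum_comm (s := univ (α := ι))]
  refine Finset.sum_congr rfl fun τ _ => ?_
  simp [mul_ite, ite_mul, Finset.sum_ite_eq', Finset.sum_ite_eq]

theorem endpointMarginal_pathWeight_const (M : Matrix ι ι R) (v : ι → R) (k : ℕ) :
    endpointMarginal (fun σ : Fin (k + 1) → ι => v (σ 0) * pathWeight (fun _ => M) σ) =
      v ᵥ* M ^ k := by
  induction k with
  | zero => ext t; simp [endpointMarginal_fin_zero, pathWeight]
  | succ k ih =>
    rw [endpointMarginal_eq_vecMul (fun τ => v (τ 0) * pathWeight (fun _ => M) τ) M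
      fun σ => by rw [pathWeight_succ, ← mul_assoc]; rfl, ih, vecMul_vecMul, pow_succ]

theorem endpointMarginal_pathWeight_switch (A B : Matrix ι ι R) (v : ι → R) (k₁ k₂ : ℕ) (s : ι) :
    endpointMarginal (fun σ : Fin (k₁ + k₂ + 1) → ι =>
        v (σ 0) * pathWeight (fun l => if l < k₁ then A else B) σ *
          if σ ⟨k₁, Nat.lt_succ_of_le (Nat.le_add_right k₁ k₂)⟩ = s then 1 else 0) =
      (diagonal (v ᵥ* A ^ k₁) * B ^ k₂) s := by
  induction k₂ with
  | zero =>
    ext t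
    have hA : ∀ σ : Fin (k₁ + 1) → ι,
        pathWeight (fun l => if l < k₁ then A else B) σ = pathWeight (fun _ => A) σ :=
      pathWeight_congr fun l hl => if_pos hl
    have hind : ∀ x : ι, ((if x = s then 1 else 0) * if x = t then 1 else 0 : R) =
        (if x = s then 1 else 0) * if s = t then 1 else 0 := by
      intro x
      split_ifs <;> simp_all
    rw [← endpointMarginal_pathWeight_const, pow_zero, Matrix.mul_one, diagonal_apply, ← mul_boole,
      endpointMarginal, endpointMarginal, Finset.sum_mul]
    refine Finset.sum_congr rfl fun σ _ => ?_
    simp only [hA, mul_assoc]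
    exact congrArg _ (congrArg _ (hind (σ (Fin.last k₁))))
  | succ k₂ ih =>
    rw [endpointMarginal_eq_vecMul (fun τ : Fin (k₁ + k₂ + 1) → ι =>
        v (τ 0) * pathWeight (fun l => if l < k₁ then A else B) τ *
          if τ ⟨k₁, Nat.lt_succ_of_le (Nat.le_add_right k₁ k₂)⟩ = s then 1 else 0)
        B fun σ => ?_, ih, pow_succ, ← Matrix.mul_assoc]
    · rfl
    · rw [pathWeight_succ, if_neg (Nat.le_add_right k₁ k₂).not_gt]
      simp only [Fin.init, Fin.castSucc_zero, Fin.castSucc_mk]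
      rw [← mul_assoc]
      exact mul_right_comm (G := R) _ _ _

end PathSum

/-- Cross-moment identity for importance-sampling weighted indicator outer products on a
    stationary chain: for `m ≤ i ≤ j`, writing `k₁ = i - m` and `k₂ = j - i`,
    `E₀[ρ_m^{i-1} ρ_m^{j-1} x_i x_jᵀ] = diag((P̃ᵀ)^{k₁} μ₀) · Pπ^{k₂}`,
    with the expectation written as an explicit path sum over paths of length `k₁ + k₂`
    started from the stationary distribution `μ₀` and following the behavior policy. -/
theorem importance_sampling_cross_moment {N : ℕ} {A : Type*} [Fintype A]
    (π π₀ : Fin N → A → ℝ) (P : Fin N → A → Fin N → ℝ) (μ₀ : Fin N → ℝ)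
    (hπ₀pos : ∀ s a, 0 < π₀ s a)
    (ρ : Fin N → A → ℝ) (hρ : ∀ s a, ρ s a = π s a / π₀ s a)
    (Pt : Matrix (Fin N) (Fin N) ℝ)
    (hPt : ∀ s s', Pt s s' = ∑ a, π s a * ρ s a * P s a s')
    (Pπ : Matrix (Fin N) (Fin N) ℝ)
    (hPπ : ∀ s s', Pπ s s' = ∑ a, π s a * P s a s')
    (k₁ k₂ : ℕ) :
    (Matrix.of fun s s' : Fin N =>
        ∑ σ : Fin (k₁ + k₂ + 1) → Fin N, ∑ α : Fin (k₁ + k₂) → A,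
          μ₀ (σ 0) *
            (∏ l : Fin (k₁ + k₂),
              π₀ (σ l.castSucc) (α l) * P (σ l.castSucc) (α l) (σ l.succ)) *
            (∏ l : Fin (k₁ + k₂),
              ρ (σ l.castSucc) (α l) * (if (l : ℕ) < k₁ then ρ (σ l.castSucc) (α l) else 1)) *
            (if σ ⟨k₁, by omega⟩ = s then 1 else 0) *
            (if σ (Fin.last (k₁ + k₂)) = s' then 1 else 0)) =
      Matrix.diagonal ((Ptᵀ ^ k₁).mulVec μ₀) * Pπ ^ k₂ := by
  have hπρ : ∀ s a, π₀ s a * ρ s a = π s a := fun s a => by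
    rw [hρ, mul_div_cancel₀ _ (hπ₀pos s a).ne']
  have hstep : ∀ (l : ℕ) (s s' : Fin N),
      ∑ a, π₀ s a * P s a s' * (ρ s a * if l < k₁ then ρ s a else 1) =
        (if l < k₁ then Pt else Pπ) s s' := by
    intro l s s'
    split_ifs
    · rw [hPt]
      exact sum_congr rfl fun a _ => by rw [← hπρ]; ring
    · rw [hPπ]
      exact sum_congr rfl fun a _ => by rw [← hπρ]; ring
  ext s s'
  rw [← transpose_pow, mulVec_transpose, ← PathSum.endpointMarginal_pathWeight_switch, of_apply]
  refine sum_congr rfl fun σ _ => ?_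
  simp only [PathSum.pathWeight]
  rw [← prod_congr rfl fun (l : Fin (k₁ + k₂)) _ => hstep l (σ l.castSucc) (σ l.succ),
    Fintype.prod_sum, mul_sum, sum_mul, sum_mul]
  refine sum_congr rfl fun α _ => ?_
  simp only [prod_mul_distrib]
  ring
end
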